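/- For any two pure states |ψ⟩, |φ⟩ in a finite-dimensional Hilbert space and any Hermitian operator H, the difference of pure-state quantum Fisher informations F_Q[|ψ⟩;H] := 4(⟨ψ|H²|ψ⟩ − ⟨ψ|H|ψ⟩²) satisfies |F_Q[|ψ⟩;H] − F_Q[|φ⟩;H]| ≤ 12·‖|ψ⟩⟨ψ| − |φ⟩⟨φ|‖₁·‖H‖². -/

import Mathlib

open scoped BigOperators ComplexConjugate ComplexOrder Matrix

noncomputable section

/-- The rank-one projector `|ψ⟩⟨ψ|` as a matrix. -/
def projv {ι : Type*} [Fintype ι] (ψ : ι → ℂ) : Matrix ι ι ℂ :=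
  Matrix.vecMulVec ψ (star ψ)

/-- The inner product `⟨ψ|φ⟩`. -/
def ipc {ι : Type*} [Fintype ι] (ψ φ : ι → ℂ) : ℂ :=
  dotProduct (star ψ) φ

-- Square root of a positive semidefinite matrix (junk value `0` otherwise).
open Classical in
def msqrt {ι : Type*} [Fintype ι] [DecidableEq ι] (A : Matrix ι ι ℂ) : Matrix ι ι ℂ :=
  if h : A.PosSemidef then
    h.1.eigenvectorUnitary.1 * Matrix.diagonal ((↑) ∘ (√·) ∘ h.1.eigenvalues) *
      (star h.1.eigenvectorUnitary : Matrix ι ι ℂ) else 0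

/-- Trace norm `‖X‖₁ = Tr √(X†X)`. -/
def traceNorm {ι : Type*} [Fintype ι] [DecidableEq ι] (A : Matrix ι ι ℂ) : ℝ :=
  (msqrt (Aᴴ * A)).trace.re

/-- Uhlmann fidelity `F(ρ,σ) = Tr √(√σ ρ √σ)`. -/
def fid {ι : Type*} [Fintype ι] [DecidableEq ι] (ρ σ : Matrix ι ι ℂ) : ℝ :=
  (msqrt (msqrt σ * ρ * msqrt σ)).trace.re

/-- Operator (spectral) norm of a matrix. -/
def opNorm {ι : Type*} [Fintype ι] [DecidableEq ι] (A : Matrix ι ι ℂ) : ℝ :=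
  ‖Matrix.toEuclideanCLM (𝕜 := ℂ) A‖

/-- Expectation value `⟨ψ|H|ψ⟩` (real part). -/
def exval {ι : Type*} [Fintype ι] (ψ : ι → ℂ) (H : Matrix ι ι ℂ) : ℝ :=
  (ipc ψ (H.mulVec ψ)).re

/-- Pure-state quantum Fisher information `4(⟨H²⟩ - ⟨H⟩²)`. -/
def QFIpure {ι : Type*} [Fintype ι] (ψ : ι → ℂ) (H : Matrix ι ι ℂ) : ℝ :=
  4 * (exval ψ (H * H) - (exval ψ H) ^ 2)

/-- Density matrix predicate. -/
def IsDensity {ι : Type*} [Fintype ι] [DecidableEq ι] (ρ : Matrix ι ι ℂ) : Prop :=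
  ρ.PosSemidef ∧ ρ.trace = 1

/-! Since `⟨ψ|B|ψ⟩ = Tr(|ψ⟩⟨ψ| B)`, the change of an expectation value between two pure states
is `Tr(Δ B)` with `Δ = |ψ⟩⟨ψ| - |φ⟩⟨φ|`; diagonalising the Hermitian `Δ` bounds it by
`‖Δ‖₁ ‖B‖`. Apply this to `B = H²` and to `B = H`, and write
`⟨H⟩_ψ² - ⟨H⟩_φ² = (⟨H⟩_ψ + ⟨H⟩_φ)(⟨H⟩_ψ - ⟨H⟩_φ)` with `|⟨H⟩| ≤ ‖H‖`: the two terms contribute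
`4 ‖Δ‖₁ ‖H‖²` and `8 ‖Δ‖₁ ‖H‖²`. -/

open Matrix
open scoped Matrix.Norms.L2Operator

lemma ipc_eq_inner {ι : Type*} [Fintype ι] (u v : ι → ℂ) :
    ipc u v = inner ℂ (WithLp.toLp 2 u) (WithLp.toLp 2 v) :=
  dotProduct_comm _ _

section Spectral

open scoped MatrixOrder

variable {ι : Type*} [Fintype ι] [DecidableEq ι]

lemma opNorm_eq_norm (A : Matrix ι ι ℂ) : opNorm A = ‖A‖ := rfl

lemma norm_ipc_mulVec_le_opNorm (B : Matrix ι ι ℂ) {u : ι → ℂ} (hu : ipc u u = 1) :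
    ‖ipc u (B *ᵥ u)‖ ≤ opNorm B := by
  set x : EuclideanSpace ℂ ι := WithLp.toLp 2 u
  have hx : ‖x‖ = 1 := by
    have := inner_self_eq_norm_sq (𝕜 := ℂ) x
    rw [← ipc_eq_inner, hu] at this
    simp only [RCLike.one_re] at this
    nlinarith [norm_nonneg x]
  calc ‖ipc u (B *ᵥ u)‖ = ‖inner ℂ x (toEuclideanCLM (𝕜 := ℂ) B x)‖ := by
        rw [ipc_eq_inner, toEuclideanCLM_toLp]
    _ ≤ ‖x‖ * ‖toEuclideanCLM (𝕜 := ℂ) B x‖ := norm_inner_le_norm _ _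
    _ ≤ ‖x‖ * (‖toEuclideanCLM (𝕜 := ℂ) B‖ * ‖x‖) := by
        gcongr; exact ContinuousLinearMap.le_opNorm _ _
    _ = opNorm B := by rw [hx, one_mul, mul_one]; rfl

lemma norm_apply_self_le_opNorm (B : Matrix ι ι ℂ) (i : ι) : ‖B i i‖ ≤ opNorm B := by
  simpa [ipc] using norm_ipc_mulVec_le_opNorm B (u := Pi.single i 1) (by simp [ipc])

lemma opNorm_mul_le (A B : Matrix ι ι ℂ) : opNorm (A * B) ≤ opNorm A * opNorm B :=
  l2_opNorm_mul A B

lemma opNorm_unitary_conj (U : unitaryGroup ι ℂ) (B : Matrix ι ι ℂ) :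
    opNorm (star (U : Matrix ι ι ℂ) * B * (U : Matrix ι ι ℂ)) = opNorm B := by
  rw [opNorm_eq_norm, CStarRing.norm_mul_coe_unitary, ← Unitary.coe_star,
    CStarRing.norm_coe_unitary_mul, opNorm_eq_norm]

lemma msqrt_eq_sqrt {A : Matrix ι ι ℂ} (hA : A.PosSemidef) : msqrt A = CFC.sqrt A := by
  rw [msqrt, dif_pos hA, CFC.sqrt_eq_cfc, cfc_nnreal_eq_real _ A hA.nonneg, hA.1.cfc_eq]
  simp only [IsHermitian.cfc, Unitary.conjStarAlgAut_apply]
  congr 3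
  funext i
  simp [hA.eigenvalues_nonneg i]

lemma traceNorm_eq_re_trace_abs (A : Matrix ι ι ℂ) : traceNorm A = (CFC.abs A).trace.re := by
  rw [traceNorm, msqrt_eq_sqrt (posSemidef_conjTranspose_mul_self A)]
  rfl

lemma traceNorm_nonneg (A : Matrix ι ι ℂ) : 0 ≤ traceNorm A := by
  rw [traceNorm_eq_re_trace_abs]
  exact Complex.nonneg_iff.mp (PosSemidef.trace_nonneg (CFC.abs_nonneg A).posSemidef) |>.1

lemma Matrix.IsHermitian.trace_cfc {A : Matrix ι ι ℂ} (hA : A.IsHermitian) (f : ℝ → ℝ) :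
    (hA.cfc f).trace = ∑ i, (f (hA.eigenvalues i) : ℂ) := by
  simp [IsHermitian.cfc, trace_mul_cycle, trace_diagonal]

lemma Matrix.IsHermitian.traceNorm_eq_sum_abs_eigenvalues {A : Matrix ι ι ℂ}
    (hA : A.IsHermitian) : traceNorm A = ∑ i, |hA.eigenvalues i| := by
  rw [traceNorm_eq_re_trace_abs, CFC.abs_eq_cfc_norm A hA.isSelfAdjoint, hA.cfc_eq,
    hA.trace_cfc]
  simp

lemma Matrix.IsHermitian.trace_mul_eq_sum {A : Matrix ι ι ℂ} (hA : A.IsHermitian)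
    (B : Matrix ι ι ℂ) : (A * B).trace = ∑ i, (hA.eigenvalues i : ℂ) *
      (star (hA.eigenvectorUnitary : Matrix ι ι ℂ) * B * hA.eigenvectorUnitary) i i := by
  conv_lhs => rw [hA.spectral_theorem, Unitary.conjStarAlgAut_apply]
  rw [Matrix.mul_assoc, trace_mul_comm, ← Matrix.mul_assoc]
  simp [trace, mul_diagonal, mul_comm]

lemma Matrix.IsHermitian.norm_trace_mul_le {A : Matrix ι ι ℂ} (hA : A.IsHermitian)
    (B : Matrix ι ι ℂ) : ‖(A * B).trace‖ ≤ traceNorm A * opNorm B := by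
  rw [hA.trace_mul_eq_sum, hA.traceNorm_eq_sum_abs_eigenvalues, Finset.sum_mul]
  refine (norm_sum_le _ _).trans (Finset.sum_le_sum fun i _ => ?_)
  rw [norm_mul, Complex.norm_real, Real.norm_eq_abs,
    ← opNorm_unitary_conj hA.eigenvectorUnitary B]
  exact mul_le_mul_of_nonneg_left (norm_apply_self_le_opNorm _ i) (abs_nonneg _)

end Spectral

section PureStates

variable {ι : Type*} [Fintype ι]

lemma projv_isHermitian (ψ : ι → ℂ) : (projv ψ).IsHermitian := by
  ext i j
  simp [projv, conjTranspose_apply, vecMulVec_apply, mul_comm]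

lemma trace_projv_mul (ψ : ι → ℂ) (B : Matrix ι ι ℂ) :
    (projv ψ * B).trace = ipc ψ (B *ᵥ ψ) := by
  rw [projv, vecMulVec_mul, trace_vecMulVec, ipc, dotProduct_comm, ← dotProduct_mulVec]

lemma exval_sub_exval (ψ φ : ι → ℂ) (B : Matrix ι ι ℂ) :
    exval ψ B - exval φ B = ((projv ψ - projv φ) * B).trace.re := by
  rw [Matrix.sub_mul, trace_sub, Complex.sub_re, trace_projv_mul, trace_projv_mul, exval, exval]

variable [DecidableEq ι]

lemma abs_exval_le {ψ : ι → ℂ} (hψ : ipc ψ ψ = 1) (B : Matrix ι ι ℂ) :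
    |exval ψ B| ≤ opNorm B :=
  (Complex.abs_re_le_norm _).trans (norm_ipc_mulVec_le_opNorm B hψ)

lemma abs_exval_sub_exval_le (ψ φ : ι → ℂ) (B : Matrix ι ι ℂ) :
    |exval ψ B - exval φ B| ≤ traceNorm (projv ψ - projv φ) * opNorm B := by
  rw [exval_sub_exval]
  exact (Complex.abs_re_le_norm _).trans
    (((projv_isHermitian ψ).sub (projv_isHermitian φ)).norm_trace_mul_le B)

end PureStates

theorem QFIpure_continuity_traceNorm_general {n : ℕ} (ψ φ : Fin n → ℂ)
    (hψ : ipc ψ ψ = 1) (hφ : ipc φ φ = 1)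
    (H : Matrix (Fin n) (Fin n) ℂ) :
    |QFIpure ψ H - QFIpure φ H| ≤ 12 * traceNorm (projv ψ - projv φ) * opNorm H ^ 2 := by
  set T := traceNorm (projv ψ - projv φ)
  set N := opNorm H
  have hT : 0 ≤ T := traceNorm_nonneg _
  have hN : 0 ≤ N := norm_nonneg _
  have hsq : |exval ψ (H * H) - exval φ (H * H)| ≤ T * N ^ 2 :=
    (abs_exval_sub_exval_le ψ φ _).trans
      (by rw [sq]; exact mul_le_mul_of_nonneg_left (opNorm_mul_le H H) hT)
  have hlin : |exval ψ H - exval φ H| ≤ T * N := abs_exval_sub_exval_le ψ φ H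
  have hsum : |exval ψ H + exval φ H| ≤ 2 * N := by
    linarith [abs_add_le (exval ψ H) (exval φ H), abs_exval_le hψ H, abs_exval_le hφ H]
  calc |QFIpure ψ H - QFIpure φ H|
      = 4 * |(exval ψ (H * H) - exval φ (H * H))
          - (exval ψ H + exval φ H) * (exval ψ H - exval φ H)| := by
        rw [QFIpure, QFIpure, ← mul_sub, abs_mul, abs_of_pos four_pos]
        ring_nf
    _ ≤ 4 * (|exval ψ (H * H) - exval φ (H * H)|
          + |exval ψ H + exval φ H| * |exval ψ H - exval φ H|) := by
        rw [← abs_mul]; gcongr; exact abs_sub _ _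
    _ ≤ 4 * (T * N ^ 2 + 2 * N * (T * N)) := by gcongr
    _ = 12 * T * N ^ 2 := by ring

/-- continuity of the pure-state QFI in trace norm:
`|F_Q[ψ;H] − F_Q[φ;H]| ≤ 12 ‖ψ−φ‖₁ ‖H‖²`. -/
theorem QFIpure_continuity_traceNorm {n : ℕ} (ψ φ : Fin n → ℂ)
    (hψ : ipc ψ ψ = 1) (hφ : ipc φ φ = 1)
    (H : Matrix (Fin n) (Fin n) ℂ) (hH : H.IsHermitian) :
    |QFIpure ψ H - QFIpure φ H| ≤ 12 * traceNorm (projv ψ - projv φ) * opNorm H ^ 2 :=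
  QFIpure_continuity_traceNorm_general ψ φ hψ hφ H
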